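/- arXiv:1307.3176 — 3 statements merged into one kernel-verified Lean document; each statement's English description precedes it below -/
import Mathlib

section
/- With step sizes γ_i = κc/(c+i) for constants κ ∈ (0,1), c > 0, μ > 0 satisfying μcκ(1-κ) > 1/2, the sum ∑_{i=1}^n L_i², where L_i² := γ_i² ∏_{j=i}^{n-1}(1 - 2μγ_{j+1}(1-γ_{j+1})), is bounded by κ²c²/((2μcκ(1-κ) - 1)·(n+c)), provided γ_j ∈ (0,1) and 2μγ_j(1-γ_j) ∈ (0,1) for all j. -/
/-!
The partial sums `S n = ∑_{i ≤ n} L_i²` satisfy the affine recursion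
`S (n+1) = γ_{n+1}² + (1 - 2μγ_{n+1}(1-γ_{n+1})) S n` with nonnegative coefficient, so it suffices
that the claimed bound `B n = κ²c² / (A (n+c))`, `A = 2μcκ(1-κ) - 1`, is a supersolution of it.
Clearing denominators, `B (n+1) - γ_{n+1}² - (1 - 2μγ_{n+1}(1-γ_{n+1})) B n` has the sign of
`2μκ²c n + 2μκc - 1`, which is positive because `2μκc > 2μcκ(1-κ) > 1`.
-/

open Finset

lemma sum_Icc_mul_prod_Icc_succ {R : Type*} [CommSemiring R] (a f : ℕ → R) (n : ℕ) :
    ∑ i ∈ Icc 1 (n + 1), a i * ∏ j ∈ Icc i n, f (j + 1) =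
      a (n + 1) + f (n + 1) * ∑ i ∈ Icc 1 n, a i * ∏ j ∈ Icc i (n - 1), f (j + 1) := by
  rw [sum_Icc_succ_top (by omega), Icc_eq_empty_of_lt n.lt_succ_self, prod_empty, mul_one,
    add_comm, mul_sum]
  congr 1
  refine sum_congr rfl fun i hi => ?_
  obtain ⟨hi1, hin⟩ := mem_Icc.mp hi
  obtain ⟨k, rfl⟩ : ∃ k, n = k + 1 := ⟨n - 1, by omega⟩
  rw [prod_Icc_succ_top (by omega), Nat.add_sub_cancel]
  ring

lemma le_of_affine_recursion {S B a β : ℕ → ℝ}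
    (hS : ∀ n, S (n + 1) = a (n + 1) + β (n + 1) * S n) (hβ : ∀ n, 0 ≤ β (n + 1))
    (h0 : S 0 ≤ B 0) (hB : ∀ n, a (n + 1) + β (n + 1) * B n ≤ B (n + 1)) (n : ℕ) :
    S n ≤ B n := by
  induction n with
  | zero => exact h0
  | succ n ih =>
    calc S (n + 1) = a (n + 1) + β (n + 1) * S n := hS n
      _ ≤ a (n + 1) + β (n + 1) * B n := by gcongr; exact hβ n
      _ ≤ B (n + 1) := hB n

lemma sq_stepsize_add_mul_bound_le_bound_succ {κ c μ x : ℝ} (hκ : κ ∈ Set.Ioo (0 : ℝ) 1)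
    (hc : 0 < c) (hμ : 0 < μ) (hkey : 1 / 2 < μ * c * κ * (1 - κ)) (hx : 0 ≤ x) :
    (κ * c / (c + (x + 1))) ^ 2 + (1 - 2 * μ * (κ * c / (c + (x + 1))) *
        (1 - κ * c / (c + (x + 1)))) * (κ ^ 2 * c ^ 2 / ((2 * μ * c * κ * (1 - κ) - 1) * (x + c)))
      ≤ κ ^ 2 * c ^ 2 / ((2 * μ * c * κ * (1 - κ) - 1) * (x + 1 + c)) := by
  obtain ⟨hκ0, hκ1⟩ := hκ
  set A := 2 * μ * c * κ * (1 - κ) - 1 with hA_def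
  have hA : 0 < A := by linarith
  have hm : 0 < x + c := by positivity
  have hdiff : κ ^ 2 * c ^ 2 / (A * (x + 1 + c)) -
      ((κ * c / (c + (x + 1))) ^ 2 + (1 - 2 * μ * (κ * c / (c + (x + 1))) *
        (1 - κ * c / (c + (x + 1)))) * (κ ^ 2 * c ^ 2 / (A * (x + c)))) =
      κ ^ 2 * c ^ 2 * (2 * μ * κ ^ 2 * c * x + 2 * μ * κ * c - 1) /
        (A * (x + c) * (x + 1 + c) ^ 2) := by
    field_simp
    rw [hA_def]
    ring
  have hnum : 0 ≤ 2 * μ * κ ^ 2 * c * x + 2 * μ * κ * c - 1 := by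
    have : 0 ≤ 2 * μ * κ ^ 2 * c * x := by positivity
    nlinarith [mul_pos (mul_pos hμ hc) hκ0]
  rw [← sub_nonneg, hdiff]
  positivity

/-- With step sizes `γ_i = κc/(c+i)`, `κ ∈ (0,1)`, `c > 0`, `μ > 0`, `μcκ(1-κ) > 1/2`,
the sum `∑_{i=1}^n L_i²` with `L_i² = γ_i² ∏_{j=i}^{n-1} (1 - 2μγ_{j+1}(1-γ_{j+1}))`
is bounded by `κ²c² / ((2μcκ(1-κ) - 1)(n+c))`. -/
theorem stmt4 (κ c μ : ℝ) (n : ℕ)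
    (hκ : κ ∈ Set.Ioo (0 : ℝ) 1) (hc : 0 < c) (hμ : 0 < μ)
    (γ : ℕ → ℝ) (hγ : ∀ i : ℕ, γ i = κ * c / (c + i))
    (hkey : 1 / 2 < μ * c * κ * (1 - κ))
    (hfac : ∀ j : ℕ, 0 < 2 * μ * γ j * (1 - γ j) ∧ 2 * μ * γ j * (1 - γ j) < 1) :
    ∑ i ∈ Finset.Icc 1 n,
        (γ i) ^ 2 * ∏ j ∈ Finset.Icc i (n - 1), (1 - 2 * μ * γ (j + 1) * (1 - γ (j + 1))) ≤
      κ ^ 2 * c ^ 2 / ((2 * μ * c * κ * (1 - κ) - 1) * ((n : ℝ) + c)) := by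
  have hA : 0 < 2 * μ * c * κ * (1 - κ) - 1 := by linarith
  refine le_of_affine_recursion (a := fun i => γ i ^ 2) (β := fun j => 1 - 2 * μ * γ j * (1 - γ j))
    (S := fun n => ∑ i ∈ Icc 1 n, γ i ^ 2 * ∏ j ∈ Icc i (n - 1),
      (1 - 2 * μ * γ (j + 1) * (1 - γ (j + 1))))
    (B := fun n => κ ^ 2 * c ^ 2 / ((2 * μ * c * κ * (1 - κ) - 1) * ((n : ℝ) + c)))
    (sum_Icc_mul_prod_Icc_succ (fun i => γ i ^ 2) (fun j => 1 - 2 * μ * γ j * (1 - γ j)))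
    (fun j => by linarith [hfac (j + 1)])
    (by simp only [Icc_eq_empty_of_lt zero_lt_one, sum_empty]; positivity)
    (fun m => ?_) n
  have := sq_stepsize_add_mul_bound_le_bound_succ hκ hc hμ hkey (Nat.cast_nonneg m)
  simpa only [hγ, Nat.cast_succ] using this
end

section
/- Let γ_k = κc/(c+k) with μcκ > 1/2. Then ∑_{k=1}^n exp(-2μ(Γ_n - Γ_k))/(μ²k²) ≤ C/(n+c) for some constant C depending only on μ, c, κ, where Γ_n = ∑_{i=1}^n κc/(c+i). (Specifically, using exp(-2μ(Γ_n-Γ_k)) ≤ ((k+c)/(n+c))^{2μcκ}, the sum is O(1/(n+c)).) -/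
/-!
Since `1/(c+i) ≥ log (c+i+1) - log (c+i)`, the gap `Γ n - Γ k` dominates
`κc log ((c+n+1)/(c+k+1))`, so with `a = 2μcκ > 1` each summand is at most
`((c+k+1)/(c+n+1))^a / (μ²k²)`. It remains to show `∑_{k ≤ n} (c+k+1)^a / k² = O((c+n+1)^(a-1))`;
as `(c+k+1)/k ≤ c+2` the summand is `O((c+k+1)^(a-2))`, and this telescopes against the
increments of `x ↦ x^(a-1)` because `y^p - (y-1)^p ≥ p/(p+1) · y^(p-1)` for `y ≥ 1`, `p > 0`.
-/

open Real Finset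

lemma sum_Icc_one_sub_sum_Icc_one {M : Type*} [AddCommGroup M] (f : ℕ → M) {k n : ℕ}
    (hkn : k ≤ n) : ∑ i ∈ Icc 1 n, f i - ∑ i ∈ Icc 1 k, f i = ∑ i ∈ Ioc k n, f i := by
  have hIcc : ∀ m, Icc 1 m = Ioc 0 m := fun m => Icc_add_one_left_eq_Ioc 0 m
  rw [hIcc, hIcc, ← sum_Ioc_consecutive f (Nat.zero_le k) hkn, add_sub_cancel_left]

lemma log_add_one_sub_log_le_inv {y : ℝ} (hy : 0 < y) : log (y + 1) - log y ≤ y⁻¹ := by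
  rw [← log_div (by positivity) hy.ne']
  calc log ((y + 1) / y) ≤ (y + 1) / y - 1 := log_le_sub_one_of_pos (by positivity)
    _ = y⁻¹ := by field_simp; ring

lemma log_sub_log_le_sum_inv {c : ℝ} (hc : 0 ≤ c) {k n : ℕ} (hkn : k ≤ n) :
    log (c + n + 1) - log (c + k + 1) ≤ ∑ i ∈ Ioc k n, (c + i)⁻¹ := by
  induction n, hkn using Nat.le_induction with
  | base => simp
  | succ n _ ih =>
    have hstep := log_add_one_sub_log_le_inv (y := c + n + 1) (by positivity)
    rw [sum_Ioc_succ_top (by omega)]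
    simp only [Nat.cast_add, Nat.cast_one, ← add_assoc]
    linarith

lemma exp_neg_mul_sum_inv_le_rpow_div {a c : ℝ} (ha : 0 ≤ a) (hc : 0 ≤ c) {k n : ℕ} (hkn : k ≤ n) :
    exp (-a * ∑ i ∈ Ioc k n, (c + i)⁻¹) ≤ (c + k + 1) ^ a / (c + n + 1) ^ a := by
  rw [rpow_def_of_pos (by positivity), rpow_def_of_pos (by positivity), ← exp_sub]
  gcongr
  nlinarith [log_sub_log_le_sum_inv hc hkn]

lemma div_add_one_mul_rpow_sub_one_le_rpow_sub_rpow {p y : ℝ} (hp : 0 < p) (hy : 1 ≤ y) :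
    p / (p + 1) * y ^ (p - 1) ≤ y ^ p - (y - 1) ^ p := by
  have hy0 : 0 < y := by linarith
  -- both steps are `x + 1 ≤ exp x`: `1 - 1/y ≤ exp (-1/y)` and `exp (p/y) ≥ 1 + p/y`
  have hshrink : (y - 1) ^ p ≤ y ^ p * (y / (y + p)) := by
    have h1 : (1 - y⁻¹) ^ p ≤ exp (-y⁻¹) ^ p :=
      rpow_le_rpow (by rw [sub_nonneg]; exact inv_le_one_of_one_le₀ hy)
        (by linarith [add_one_le_exp (-y⁻¹)]) hp.le
    have h2 : exp (-y⁻¹) ^ p ≤ y / (y + p) := by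
      rw [← exp_mul, neg_mul, exp_neg, inv_le_comm₀ (exp_pos _) (by positivity)]
      calc (y / (y + p))⁻¹ = y⁻¹ * p + 1 := by field_simp; ring
        _ ≤ exp (y⁻¹ * p) := add_one_le_exp _
    calc (y - 1) ^ p = y ^ p * (1 - y⁻¹) ^ p := by
          rw [← mul_rpow hy0.le (by rw [sub_nonneg]; exact inv_le_one_of_one_le₀ hy)]
          congr 1; field_simp
      _ ≤ y ^ p * (y / (y + p)) := by gcongr; exact h1.trans h2
  have hyp : y ^ (p - 1) = y ^ p / y := rpow_sub_one hy0.ne' p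
  have hY : 0 < y ^ p := rpow_pos_of_pos hy0 p
  have key : p / (p + 1) * (y ^ p / y) ≤ y ^ p - y ^ p * (y / (y + p)) := by
    field_simp
    nlinarith [mul_nonneg (mul_nonneg hp.le hY.le) (mul_nonneg hp.le (sub_nonneg.2 hy))]
  rw [hyp]
  linarith

lemma rpow_div_sq_le_mul_rpow_sub_rpow {a c k : ℝ} (ha : 1 < a) (hc : 0 ≤ c) (hk : 1 ≤ k) :
    (c + k + 1) ^ a / k ^ 2 ≤
      (c + 2) ^ 2 * (a / (a - 1)) * ((c + k + 1) ^ (a - 1) - (c + k) ^ (a - 1)) := by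
  set y := c + k + 1
  have hy : 0 < y := by positivity
  have hyk : y / k ≤ c + 2 := by
    rw [div_le_iff₀ (by positivity)]; nlinarith
  have hincr := div_add_one_mul_rpow_sub_one_le_rpow_sub_rpow (sub_pos.2 ha) (y := y) (by linarith)
  rw [sub_add_cancel, sub_sub, one_add_one_eq_two, show y - 1 = c + k by ring] at hincr
  have hy2 : y ^ (a - 2) ≤ a / (a - 1) * (y ^ (a - 1) - (c + k) ^ (a - 1)) := by
    rw [div_mul_eq_mul_div, le_div_iff₀ (by linarith)]
    rw [div_mul_eq_mul_div, div_le_iff₀ (by linarith)] at hincr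
    linarith
  calc y ^ a / k ^ 2 = (y / k) ^ 2 * y ^ (a - 2) := by
        rw [show (a - 2) = a - ((2 : ℕ) : ℝ) by norm_num, rpow_sub_natCast hy.ne']
        field_simp
    _ ≤ (c + 2) ^ 2 * (a / (a - 1) * (y ^ (a - 1) - (c + k) ^ (a - 1))) := by
        gcongr
    _ = _ := by ring

lemma sum_rpow_div_sq_le {a c : ℝ} (ha : 1 < a) (hc : 0 ≤ c) (n : ℕ) :
    ∑ k ∈ Icc 1 n, (c + k + 1) ^ a / (k : ℝ) ^ 2 ≤
      (c + 2) ^ 2 * (a / (a - 1)) * (c + n + 1) ^ (a - 1) := by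
  have hK : 0 ≤ (c + 2) ^ 2 * (a / (a - 1)) := by
    have : 0 < a - 1 := by linarith
    positivity
  induction n with
  | zero => simpa using mul_nonneg hK (rpow_nonneg (by linarith) (a - 1))
  | succ n ih =>
    rw [sum_Icc_succ_top (by omega)]
    have hterm := rpow_div_sq_le_mul_rpow_sub_rpow ha hc (k := n + 1) (by simp)
    push_cast
    rw [← add_assoc] at hterm ⊢
    linarith

theorem stmt5_general (κ c μ : ℝ) (hc : 0 < c)
    (h : 1 / 2 < μ * c * κ)
    (Γ : ℕ → ℝ) (hΓ : ∀ n : ℕ, Γ n = ∑ i ∈ Finset.Icc 1 n, κ * c / (c + i)) :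
    ∃ C : ℝ, ∀ n : ℕ, 1 ≤ n →
      ∑ k ∈ Finset.Icc 1 n, Real.exp (-2 * μ * (Γ n - Γ k)) / (μ ^ 2 * (k : ℝ) ^ 2) ≤
        C / ((n : ℝ) + c) := by
  set a := 2 * μ * c * κ
  have ha : 1 < a := by linarith
  have hμ : μ ≠ 0 := by rintro rfl; norm_num at h
  refine ⟨(c + 2) ^ 2 * (a / (a - 1)) / μ ^ 2, fun n _ => ?_⟩
  have hN : 0 < c + n + 1 := by positivity
  have hexp : ∀ k ∈ Icc 1 n, exp (-2 * μ * (Γ n - Γ k)) ≤ (c + k + 1) ^ a / (c + n + 1) ^ a := by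
    intro k hk
    have hkn := (mem_Icc.1 hk).2
    rw [hΓ n, hΓ k, sum_Icc_one_sub_sum_Icc_one _ hkn]
    convert exp_neg_mul_sum_inv_le_rpow_div (a := a) (by linarith) hc.le hkn using 2
    simp only [mul_sum]
    exact sum_congr rfl fun i _ => by ring
  calc _ ≤ ∑ k ∈ Icc 1 n, (c + k + 1) ^ a / (c + n + 1) ^ a / (μ ^ 2 * (k : ℝ) ^ 2) := by
        gcongr with k hk
        exact hexp k hk
    _ = (∑ k ∈ Icc 1 n, (c + k + 1) ^ a / (k : ℝ) ^ 2) / (μ ^ 2 * (c + n + 1) ^ a) := by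
        rw [sum_div]
        exact sum_congr rfl fun k _ => by ring
    _ ≤ (c + 2) ^ 2 * (a / (a - 1)) * (c + n + 1) ^ (a - 1) / (μ ^ 2 * (c + n + 1) ^ a) := by
        gcongr
        exact sum_rpow_div_sq_le ha hc.le n
    _ = (c + 2) ^ 2 * (a / (a - 1)) / μ ^ 2 / (c + n + 1) := by
        rw [rpow_sub_one hN.ne']
        field_simp
    _ ≤ _ := div_le_div_of_nonneg_left (by positivity) (by positivity) (by linarith)

/-- With `γ_k = κc/(c+k)` and `μcκ > 1/2`, there is a constant `C` (depending only on
`μ, c, κ`) with `∑_{k=1}^n exp(-2μ(Γ_n - Γ_k))/(μ²k²) ≤ C/(n+c)` for all `n ≥ 1`,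
where `Γ_n = ∑_{i=1}^n κc/(c+i)`. -/
theorem stmt5 (κ c μ : ℝ) (hκ : κ ∈ Set.Ioo (0 : ℝ) 1) (hc : 0 < c) (hμ : 0 < μ)
    (h : 1 / 2 < μ * c * κ)
    (Γ : ℕ → ℝ) (hΓ : ∀ n : ℕ, Γ n = ∑ i ∈ Finset.Icc 1 n, κ * c / (c + i)) :
    ∃ C : ℝ, ∀ n : ℕ, 1 ≤ n →
      ∑ k ∈ Finset.Icc 1 n, Real.exp (-2 * μ * (Γ n - Γ k)) / (μ ^ 2 * (k : ℝ) ^ 2) ≤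
        C / ((n : ℝ) + c) :=
  stmt5_general κ c μ hc h Γ hΓ
end

section
/- Combining the two previous facts: if G: ℝ^d\{0} → D ⊂ ℝ^d is the argmin map of a compact set with G(aθ) = G(θ) for a > 0 and ‖G(u)-G(v)‖ ≤ J‖u-v‖ for unit vectors, then for θ*, θ ≠ 0, (θ*)ᵀ(G(θ) - G(θ*)) ≤ 2J ‖θ* - θ‖² / ‖θ*‖. -/
/-! Optimality of `G θ` for `θ` gives `⟪θ, G θ - G θs⟫ ≤ 0`, hence
`⟪θs, G θ - G θs⟫ ≤ ⟪θs - θ, G θ - G θs⟫ ≤ ‖θs - θ‖ ‖G θ - G θs‖`. By scale invariance `G` only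
sees the normalizations of `θs` and `θ`, which lie within `2‖θs - θ‖/‖θs‖` of each other, so the
Lipschitz bound on the sphere controls the second factor. -/

open scoped RealInnerProductSpace

namespace NormedSpace

variable {E : Type*} [NormedAddCommGroup E] [NormedSpace ℝ E]

lemma norm_normalize_le (v : E) : ‖normalize v‖ ≤ 1 := by
  rcases eq_or_ne v 0 with rfl | hv
  · simp
  · exact (norm_normalize hv).le

lemma norm_normalize_sub_normalize_le {u : E} (hu : u ≠ 0) (v : E) :
    ‖normalize u - normalize v‖ ≤ 2 * ‖u - v‖ / ‖u‖ := by
  have hu' : 0 < ‖u‖ := norm_pos_iff.mpr hu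
  have hsplit : normalize u - normalize v = ‖u‖⁻¹ • ((u - v) + (‖v‖ - ‖u‖) • normalize v) := by
    rw [sub_smul, norm_smul_normalize, smul_add, smul_sub, smul_sub, smul_smul,
      inv_mul_cancel₀ hu'.ne', one_smul, normalize]
    abel
  have hnorm_diff : |‖v‖ - ‖u‖| ≤ ‖u - v‖ := by
    rw [abs_sub_comm]
    exact abs_norm_sub_norm_le u v
  calc ‖normalize u - normalize v‖
      = ‖u‖⁻¹ * ‖(u - v) + (‖v‖ - ‖u‖) • normalize v‖ := by
        rw [hsplit, norm_smul, norm_inv, norm_norm]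
    _ ≤ ‖u‖⁻¹ * (‖u - v‖ + |‖v‖ - ‖u‖| * 1) := by
        gcongr
        refine (norm_add_le _ _).trans ?_
        rw [norm_smul, Real.norm_eq_abs]
        gcongr
        exact norm_normalize_le v
    _ ≤ ‖u‖⁻¹ * (‖u - v‖ + ‖u - v‖) := by gcongr; linarith
    _ = 2 * ‖u - v‖ / ‖u‖ := by ring

end NormedSpace

open NormedSpace in
lemma norm_sub_le_of_smul_invariant_of_lipschitz_on_sphere
    {E F : Type*} [NormedAddCommGroup E] [NormedSpace ℝ E] [SeminormedAddCommGroup F]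
    {G : E → F} {J : ℝ} (hJ : 0 ≤ J)
    (hscale : ∀ (a : ℝ), 0 < a → ∀ θ : E, θ ≠ 0 → G (a • θ) = G θ)
    (hlip : ∀ u v : E, ‖u‖ = 1 → ‖v‖ = 1 → ‖G u - G v‖ ≤ J * ‖u - v‖)
    {u v : E} (hu : u ≠ 0) (hv : v ≠ 0) :
    ‖G u - G v‖ ≤ J * (2 * ‖u - v‖ / ‖u‖) := by
  have hG_normalize : ∀ θ : E, θ ≠ 0 → G (normalize θ) = G θ := fun θ hθ =>
    hscale _ (inv_pos.mpr (norm_pos_iff.mpr hθ)) θ hθ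
  calc ‖G u - G v‖ = ‖G (normalize u) - G (normalize v)‖ := by
        rw [hG_normalize u hu, hG_normalize v hv]
    _ ≤ J * ‖normalize u - normalize v‖ := hlip _ _ (norm_normalize hu) (norm_normalize hv)
    _ ≤ J * (2 * ‖u - v‖ / ‖u‖) := by gcongr; exact norm_normalize_sub_normalize_le hu v

lemma inner_sub_le_norm_sub_mul_of_inner_le {E : Type*} [NormedAddCommGroup E]
    [InnerProductSpace ℝ E] {θ θs a b : E} (h : ⟪θ, a⟫ ≤ ⟪θ, b⟫) :
    ⟪θs, a - b⟫ ≤ ‖θs - θ‖ * ‖a - b‖ := by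
  have hθ : ⟪θ, a - b⟫ ≤ 0 := by rw [inner_sub_right]; linarith
  calc ⟪θs, a - b⟫ = ⟪θs - θ, a - b⟫ + ⟪θ, a - b⟫ := by rw [inner_sub_left]; ring
    _ ≤ ‖θs - θ‖ * ‖a - b‖ := by linarith [real_inner_le_norm (θs - θ) (a - b)]

theorem stmt16_general {d : ℕ} (D : Set (EuclideanSpace ℝ (Fin d)))
    (G : EuclideanSpace ℝ (Fin d) → EuclideanSpace ℝ (Fin d)) (J : ℝ) (hJ : 0 < J)
    (hG : ∀ θ : EuclideanSpace ℝ (Fin d), θ ≠ 0 →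
      G θ ∈ D ∧ ∀ x ∈ D, ⟪θ, G θ⟫ ≤ ⟪θ, x⟫)
    (hscale : ∀ (a : ℝ), 0 < a → ∀ θ : EuclideanSpace ℝ (Fin d), θ ≠ 0 → G (a • θ) = G θ)
    (hlip : ∀ u v : EuclideanSpace ℝ (Fin d), ‖u‖ = 1 → ‖v‖ = 1 →
      ‖G u - G v‖ ≤ J * ‖u - v‖)
    (θs θ : EuclideanSpace ℝ (Fin d)) (hθs : θs ≠ 0) (hθ : θ ≠ 0) :
    ⟪θs, G θ - G θs⟫ ≤ 2 * J * ‖θs - θ‖ ^ 2 / ‖θs‖ := by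
  have hG_close : ‖G θ - G θs‖ ≤ J * (2 * ‖θs - θ‖ / ‖θs‖) := by
    rw [norm_sub_rev]
    exact norm_sub_le_of_smul_invariant_of_lipschitz_on_sphere hJ.le hscale hlip hθs hθ
  calc ⟪θs, G θ - G θs⟫ ≤ ‖θs - θ‖ * ‖G θ - G θs‖ :=
        inner_sub_le_norm_sub_mul_of_inner_le ((hG θ hθ).2 _ (hG θs hθs).1)
    _ ≤ ‖θs - θ‖ * (J * (2 * ‖θs - θ‖ / ‖θs‖)) := by gcongr
    _ = 2 * J * ‖θs - θ‖ ^ 2 / ‖θs‖ := by ring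

/-- If `G` is the argmin map of a compact set `D` (unique minimizer of `x ↦ ⟪θ, x⟫`),
scale invariant, and `J`-Lipschitz on unit vectors, then for nonzero `θ*, θ`:
`⟪θ*, G(θ) - G(θ*)⟫ ≤ 2J‖θ* - θ‖²/‖θ*‖`. -/
theorem stmt16 {d : ℕ} (D : Set (EuclideanSpace ℝ (Fin d))) (hD : IsCompact D)
    (G : EuclideanSpace ℝ (Fin d) → EuclideanSpace ℝ (Fin d)) (J : ℝ) (hJ : 0 < J)
    (hG : ∀ θ : EuclideanSpace ℝ (Fin d), θ ≠ 0 →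
      G θ ∈ D ∧ ∀ x ∈ D, ⟪θ, G θ⟫ ≤ ⟪θ, x⟫)
    (hscale : ∀ (a : ℝ), 0 < a → ∀ θ : EuclideanSpace ℝ (Fin d), θ ≠ 0 → G (a • θ) = G θ)
    (hlip : ∀ u v : EuclideanSpace ℝ (Fin d), ‖u‖ = 1 → ‖v‖ = 1 →
      ‖G u - G v‖ ≤ J * ‖u - v‖)
    (θs θ : EuclideanSpace ℝ (Fin d)) (hθs : θs ≠ 0) (hθ : θ ≠ 0) :
    ⟪θs, G θ - G θs⟫ ≤ 2 * J * ‖θs - θ‖ ^ 2 / ‖θs‖ :=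
  stmt16_general D G J hJ hG hscale hlip θs θ hθs hθ
end
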